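/- For any γ ≥ 0 there is a constant C such that for all x, y ∈ ℝ² and any fixed ε ∈ (0, 1/2): ∫_{ℝ²} (|x - y₁|^{-ε} + ⟨x - y₁⟩^γ) ⟨y₁⟩^{-2-2γ-ε} (|y₁ - y|^γ + |y₁ - y|^{-1}) dy₁ ≤ C ⟨x⟩^γ ⟨y⟩^γ. -/

import Mathlib

/-!
Each factor splits into a bounded part and a singular part supported in the unit ball:
`‖z‖ ^ (-a) ≤ 1 + K_a z` with `K_a = ‖·‖ ^ (-a)` cut off to the ball, and Peetre's inequality
`⟨u - v⟩ ^ γ ≤ ⟨u⟩ ^ γ ⟨v⟩ ^ γ` moves the growing weights onto `⟨x⟩ ^ γ ⟨y⟩ ^ γ` and two copies of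
`⟨y₁⟩ ^ γ`, which the decay `⟨y₁⟩ ^ (-2 - 2γ - ε)` absorbs. What is left is
`⟨y₁⟩ ^ (-2 - ε) (2 + K_ε (y₁ - x)) (2 + K_1 (y₁ - y))`. Young's inequality with exponents `3` and
`3/2` separates the two singularities into `K_{3ε} (y₁ - x)` and `K_{3/2} (y₁ - y)`, integrable on
`ℝ²` since `3ε, 3/2 < 2`, and translation invariance makes every integral independent of `x, y`.
-/

open MeasureTheory Metric Set

section Pointwise

variable {E : Type*} [SeminormedAddCommGroup E]

noncomputable def truncKernel (a : ℝ) : E → ℝ := (ball (0 : E) 1).indicator fun z => ‖z‖ ^ (-a)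

/-- With `s = truncKernel a z`, the part of `(2 + s) * (2 + t)` charged to `s` once Young's
inequality `s * t ≤ s ^ p / p + t ^ q / q` has been applied. -/
noncomputable def kernelMajorant (a p : ℝ) (z : E) : ℝ :=
  2 * truncKernel a z + truncKernel (p * a) z / p

lemma truncKernel_nonneg (a : ℝ) (z : E) : 0 ≤ truncKernel a z :=
  indicator_nonneg (fun w _ => Real.rpow_nonneg (norm_nonneg w) _) z

lemma truncKernel_rpow (a : ℝ) {p : ℝ} (hp : p ≠ 0) (z : E) :
    truncKernel a z ^ p = truncKernel (p * a) z := by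
  by_cases h : z ∈ ball (0 : E) 1
  · simp only [truncKernel, indicator_of_mem h, ← Real.rpow_mul (norm_nonneg z)]
    ring_nf
  · simp only [truncKernel, indicator_of_notMem h, Real.zero_rpow hp]

lemma norm_rpow_neg_le_one_add_truncKernel {a : ℝ} (ha : 0 ≤ a) (z : E) :
    ‖z‖ ^ (-a) ≤ 1 + truncKernel a z := by
  by_cases h : z ∈ ball (0 : E) 1
  · rw [truncKernel, indicator_of_mem h]
    linarith
  · rw [truncKernel, indicator_of_notMem h, add_zero]
    exact Real.rpow_le_one_of_one_le_of_nonpos (by simpa using h) (neg_nonpos.2 ha)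

lemma truncKernel_mul_le {a b p q : ℝ} (hpq : p.HolderConjugate q) (z w : E) :
    truncKernel a z * truncKernel b w ≤
      truncKernel (p * a) z / p + truncKernel (q * b) w / q := by
  simpa only [truncKernel_rpow _ hpq.ne_zero, truncKernel_rpow _ hpq.symm.ne_zero] using
    Real.young_inequality_of_nonneg (truncKernel_nonneg a z) (truncKernel_nonneg b w) hpq

lemma one_add_norm_sub_rpow_le {γ : ℝ} (hγ : 0 ≤ γ) (u v : E) :
    (1 + ‖u - v‖) ^ γ ≤ (1 + ‖u‖) ^ γ * (1 + ‖v‖) ^ γ := by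
  rw [← Real.mul_rpow (by positivity) (by positivity)]
  exact Real.rpow_le_rpow (by positivity)
    (by nlinarith [norm_sub_le u v, norm_nonneg u, norm_nonneg v]) hγ

lemma norm_rpow_neg_add_one_add_norm_rpow_le {a γ : ℝ} (ha : 0 ≤ a) (hγ : 0 ≤ γ) (u v : E) :
    ‖u - v‖ ^ (-a) + (1 + ‖u - v‖) ^ γ ≤
      (1 + ‖u‖) ^ γ * (1 + ‖v‖) ^ γ * (2 + truncKernel a (u - v)) := by
  have hP : 1 ≤ (1 + ‖u‖) ^ γ * (1 + ‖v‖) ^ γ :=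
    one_le_mul_of_one_le_of_one_le (Real.one_le_rpow (by simp) hγ)
      (Real.one_le_rpow (by simp) hγ)
  nlinarith [norm_rpow_neg_le_one_add_truncKernel ha (u - v), one_add_norm_sub_rpow_le hγ u v,
    mul_nonneg (sub_nonneg.2 hP) (by linarith [truncKernel_nonneg a (u - v)] :
      0 ≤ 1 + truncKernel a (u - v))]

lemma weighted_integrand_le {a b γ r p q : ℝ} (ha : 0 ≤ a) (hb : 0 ≤ b) (hγ : 0 ≤ γ)
    (hr : 0 ≤ r) (hpq : p.HolderConjugate q) (x y z : E) :
    (‖x - z‖ ^ (-a) + (1 + ‖x - z‖) ^ γ) * (1 + ‖z‖) ^ (-(r + 2 * γ)) *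
        (‖z - y‖ ^ γ + ‖z - y‖ ^ (-b)) ≤
      (1 + ‖x‖) ^ γ * (1 + ‖y‖) ^ γ *
        (4 * (1 + ‖z‖) ^ (-r) + kernelMajorant a p (z - x) + kernelMajorant b q (z - y)) := by
  set Q := (1 + ‖z‖) ^ γ
  set W := (1 + ‖z‖) ^ (-r)
  set s := truncKernel a (z - x)
  set t := truncKernel b (z - y)
  have hs : 0 ≤ s := truncKernel_nonneg _ _
  have ht : 0 ≤ t := truncKernel_nonneg _ _
  have hz : 0 < 1 + ‖z‖ := by positivity
  have hA : ‖x - z‖ ^ (-a) + (1 + ‖x - z‖) ^ γ ≤ Q * (1 + ‖x‖) ^ γ * (2 + s) := by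
    rw [norm_sub_rev x z]
    exact norm_rpow_neg_add_one_add_norm_rpow_le ha hγ z x
  have hB : ‖z - y‖ ^ γ + ‖z - y‖ ^ (-b) ≤ Q * (1 + ‖y‖) ^ γ * (2 + t) := by
    have hγ' : ‖z - y‖ ^ γ ≤ (1 + ‖z - y‖) ^ γ :=
      Real.rpow_le_rpow (norm_nonneg _) (by linarith) hγ
    linarith [norm_rpow_neg_add_one_add_norm_rpow_le hb hγ z y]
  have hweight : Q * Q * (1 + ‖z‖) ^ (-(r + 2 * γ)) = W := by
    rw [← Real.rpow_add hz, ← Real.rpow_add hz]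
    congr 1
    ring
  have hW1 : W ≤ 1 := Real.rpow_le_one_of_one_le_of_nonpos (by simp) (by linarith)
  have hyoung := truncKernel_mul_le (a := a) (b := b) hpq (z - x) (z - y)
  calc (‖x - z‖ ^ (-a) + (1 + ‖x - z‖) ^ γ) * (1 + ‖z‖) ^ (-(r + 2 * γ)) *
        (‖z - y‖ ^ γ + ‖z - y‖ ^ (-b))
      ≤ (Q * (1 + ‖x‖) ^ γ * (2 + s)) * (1 + ‖z‖) ^ (-(r + 2 * γ)) *
          (Q * (1 + ‖y‖) ^ γ * (2 + t)) := by
        gcongr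
    _ = (1 + ‖x‖) ^ γ * (1 + ‖y‖) ^ γ * (W * ((2 + s) * (2 + t))) := by
        rw [← hweight]; ring
    _ ≤ _ := by
        gcongr
        unfold kernelMajorant
        nlinarith [mul_le_mul_of_nonneg_right hW1 (by positivity : 0 ≤ 2 * s + 2 * t + s * t)]

end Pointwise

section Integrability

variable {E : Type*} [NormedAddCommGroup E] [NormedSpace ℝ E] [FiniteDimensional ℝ E]
  [MeasurableSpace E] [BorelSpace E] {μ : Measure E} [μ.IsAddHaarMeasure]

lemma integrable_truncKernel (hd : 1 ≤ Module.finrank ℝ E) {a : ℝ}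
    (ha : a < Module.finrank ℝ E) : Integrable (truncKernel a) μ := by
  refine (integrableOn_ball_of_norm_le_rpow hd ha (C := 1) (ae_of_all _ fun z => ?_)
    (measurable_norm.pow_const _).aestronglyMeasurable).integrable_indicator measurableSet_ball
  rw [one_mul, Real.norm_of_nonneg (Real.rpow_nonneg (norm_nonneg z) _)]

lemma integrable_kernelMajorant (hd : 1 ≤ Module.finrank ℝ E) {a p : ℝ}
    (ha : a < Module.finrank ℝ E) (hpa : p * a < Module.finrank ℝ E) :
    Integrable (kernelMajorant a p) μ :=
  ((integrable_truncKernel hd ha).const_mul 2).add ((integrable_truncKernel hd hpa).div_const p)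

end Integrability

lemma integral_le_of_le_add_translates {G : Type*} [AddGroup G] [MeasurableSpace G]
    [MeasurableAdd G] {μ : Measure G} [μ.IsAddRightInvariant] {f w g h : G → ℝ} {c : ℝ}
    (x y : G) (hf : ∀ z, 0 ≤ f z) (hw : Integrable w μ) (hg : Integrable g μ)
    (hh : Integrable h μ) (hle : ∀ z, f z ≤ c * (w z + g (z - x) + h (z - y))) :
    ∫ z, f z ∂μ ≤ c * (∫ z, w z ∂μ + ∫ z, g z ∂μ + ∫ z, h z ∂μ) := by
  have hgx : Integrable (fun z => g (z - x)) μ := hg.comp_sub_right x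
  have hhy : Integrable (fun z => h (z - y)) μ := hh.comp_sub_right y
  have hwg : Integrable (fun z => w z + g (z - x)) μ := hw.add hgx
  calc ∫ z, f z ∂μ ≤ ∫ z, c * (w z + g (z - x) + h (z - y)) ∂μ :=
        integral_mono_of_nonneg (ae_of_all _ hf) ((hwg.add hhy).const_mul c) (ae_of_all _ hle)
    _ = _ := by
        rw [integral_const_mul, integral_add hwg hhy, integral_add hw hgx,
          integral_sub_right_eq_self g x, integral_sub_right_eq_self h y]

theorem weighted_spatial_estimate (γ ε : ℝ) (hγ : 0 ≤ γ) (hε0 : 0 < ε) (hε : ε < 1/2) :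
    ∃ C : ℝ, ∀ x y : EuclideanSpace ℝ (Fin 2),
      (∫ y1 : EuclideanSpace ℝ (Fin 2),
        (‖x - y1‖ ^ (-ε) + (1 + ‖x - y1‖) ^ γ) * (1 + ‖y1‖) ^ (-(2 + 2*γ + ε)) *
          (‖y1 - y‖ ^ γ + ‖y1 - y‖ ^ (-(1:ℝ))))
      ≤ C * (1 + ‖x‖) ^ γ * (1 + ‖y‖) ^ γ := by
  have hd : Module.finrank ℝ (EuclideanSpace ℝ (Fin 2)) = 2 := finrank_euclideanSpace_fin
  have hpq : (3 : ℝ).HolderConjugate (3 / 2) :=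
    (Real.holderConjugate_iff_eq_conjExponent (by norm_num)).2 (by norm_num)
  have hdecay : Integrable (fun z : EuclideanSpace ℝ (Fin 2) => 4 * (1 + ‖z‖) ^ (-(2 + ε))) :=
    (integrable_one_add_norm (by rw [hd]; push_cast; linarith)).const_mul 4
  have hmajε : Integrable (kernelMajorant ε 3 : EuclideanSpace ℝ (Fin 2) → ℝ) :=
    integrable_kernelMajorant (by rw [hd]; norm_num) (by rw [hd]; push_cast; linarith)
      (by rw [hd]; push_cast; linarith)
  have hmaj1 : Integrable (kernelMajorant 1 (3 / 2) : EuclideanSpace ℝ (Fin 2) → ℝ) :=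
    integrable_kernelMajorant (by rw [hd]; norm_num) (by rw [hd]; norm_num) (by rw [hd]; norm_num)
  refine ⟨(∫ z, 4 * (1 + ‖z‖) ^ (-(2 + ε))) + (∫ z, kernelMajorant ε 3 z) +
    ∫ z, kernelMajorant 1 (3 / 2) z, fun x y => le_of_le_of_eq (integral_le_of_le_add_translates
    (c := (1 + ‖x‖) ^ γ * (1 + ‖y‖) ^ γ) x y (fun z => ?_) hdecay hmajε hmaj1 fun z => ?_) (by ring)⟩
  · positivity
  · rw [show 2 + 2 * γ + ε = (2 + ε) + 2 * γ by ring]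
    exact weighted_integrand_le hε0.le zero_le_one hγ (by linarith) hpq x y z
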